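/- Let h, k be coprime positive integers. For every point (x,y) ∈ ℂ² with (x,y) ≠ (0,0) and x^(h+k) = y^(hk), the fiber of F_{h,k} over (x,y), i.e. the set {(z,w) ∈ ℂ² : h·z^k + k·w^h = (h+k)·x and z·w = y}, is finite and has exactly h+k−1 elements (so F_{h,k} has simple branching over every smooth point of its branch curve). -/

import Mathlib

/-!
The surface is quasi-homogeneous: `(z, w, x, y) ↦ (t^h z, t^k w, t^(hk) x, t^(h+k) y)` preserves
its equations, and since `gcd (h + k) (hk) = 1` every nonzero point of the branch curve is
`(t^(hk), t^(h+k))` with `t ≠ 0`. So every such fiber is a copy of the fiber over `(1, 1)`, where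
`w = z⁻¹` and `z` runs over the roots of `Q = h z^(h+k) - (h+k) z^h + k`. As
`Q' = h (h+k) z^(h-1) (z^k - 1)`, a multiple root satisfies `z^k = z^h = 1`, hence `z = 1` by
coprimality, and `1` is a double root because `Q''(1) = h k (h+k) ≠ 0`. Thus `Q` has
`h + k - 1` distinct roots.
-/

open Polynomial

theorem Multiset.card_toFinset_add_one_of_count_eq_two {α : Type*} [DecidableEq α]
    {s : Multiset α} {a : α} (ha : s.count a = 2) (hs : ∀ b ∈ s, b ≠ a → s.count b = 1) :
    s.toFinset.card + 1 = Multiset.card s := by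
  have has : a ∈ s.toFinset := by
    rw [Multiset.mem_toFinset, ← Multiset.count_pos, ha]; norm_num
  calc s.toFinset.card + 1 = ∑ b ∈ s.toFinset, (1 + if b = a then 1 else 0) := by
        rw [Finset.sum_add_distrib, Finset.sum_ite_eq', if_pos has, Finset.card_eq_sum_ones]
    _ = ∑ b ∈ s.toFinset, s.count b := by
        refine Finset.sum_congr rfl fun b hb => ?_
        rcases eq_or_ne b a with rfl | hba
        · simp [ha]
        · simp [hba, hs b (Multiset.mem_toFinset.1 hb) hba]
    _ = Multiset.card s := Multiset.toFinset_sum_count_eq s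

namespace Polynomial

variable {R : Type*} [CommRing R]

theorem rootMultiplicity_eq_one_of_not_isRoot_derivative {p : R[X]} {t : R} (hp : p ≠ 0)
    (h0 : p.IsRoot t) (h1 : ¬ p.derivative.IsRoot t) : p.rootMultiplicity t = 1 := by
  have hpos := (rootMultiplicity_pos hp).2 h0
  have hle : ¬ 1 < p.rootMultiplicity t := fun hlt =>
    h1 ((one_lt_rootMultiplicity_iff_isRoot hp).1 hlt).2
  omega

theorem rootMultiplicity_eq_two_of_not_isRoot_derivative_derivative [IsDomain R] [CharZero R]
    {p : R[X]} {t : R} (h0 : p.IsRoot t) (h1 : p.derivative.IsRoot t)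
    (h2 : ¬ p.derivative.derivative.IsRoot t) : p.rootMultiplicity t = 2 := by
  have hp : p ≠ 0 := by rintro rfl; simp at h2
  have hgt := (one_lt_rootMultiplicity_iff_isRoot hp).2 ⟨h0, h1⟩
  have e0 := derivative_rootMultiplicity_of_root h0
  have e1 := derivative_rootMultiplicity_of_root h1
  rw [rootMultiplicity_eq_zero h2] at e1
  omega

end Polynomial

section Fiber

variable {K : Type*} [Field K]

def fiberF (h k : ℕ) (x y : K) : Set (K × K) :=
  {p | (h : K) * p.1 ^ k + (k : K) * p.2 ^ h = ((h : K) + (k : K)) * x ∧ p.1 * p.2 = y}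

theorem mk_mul_mem_fiberF_iff (h k : ℕ) {t : K} (ht : t ≠ 0) (u v : K) :
    (t ^ h * u, t ^ k * v) ∈ fiberF h k (t ^ (h * k)) (t ^ (h + k)) ↔ (u, v) ∈ fiberF h k 1 1 := by
  have htn : ∀ n : ℕ, t ^ n ≠ 0 := fun n => pow_ne_zero n ht
  have e1 : (h : K) * (t ^ h * u) ^ k + k * (t ^ k * v) ^ h =
      t ^ (h * k) * (h * u ^ k + k * v ^ h) := by ring
  have e2 : ((h : K) + k) * t ^ (h * k) = t ^ (h * k) * (h + k) := by ring
  have e3 : t ^ h * u * (t ^ k * v) = t ^ (h + k) * (u * v) := by ring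
  simp only [fiberF, Set.mem_ofPred_eq, e1, e2, e3, mul_right_inj' (htn _), mul_eq_left₀ (htn _),
    mul_one]

theorem fiberF_pow_pow (h k : ℕ) {t : K} (ht : t ≠ 0) :
    fiberF h k (t ^ (h * k)) (t ^ (h + k)) =
      (fun p : K × K => (t ^ h * p.1, t ^ k * p.2)) '' fiberF h k 1 1 := by
  ext p
  constructor
  · intro hp
    refine ⟨(p.1 / t ^ h, p.2 / t ^ k), (mk_mul_mem_fiberF_iff h k ht _ _).1 ?_, ?_⟩ <;>
      simp only [mul_div_cancel₀ _ (pow_ne_zero _ ht), hp]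
  · rintro ⟨⟨u, v⟩, huv, rfl⟩
    exact (mk_mul_mem_fiberF_iff h k ht u v).2 huv

/-- Substituting `w = z⁻¹` in the equations of `fiberF h k 1 1` and clearing denominators. -/
noncomputable def fiberPoly (h k : ℕ) : K[X] :=
  C (h : K) * X ^ (h + k) - C ((h : K) + (k : K)) * X ^ h + C (k : K)

theorem eval_fiberPoly (h k : ℕ) (u : K) :
    (fiberPoly h k).eval u = h * u ^ (h + k) - (h + k) * u ^ h + k := by
  simp [fiberPoly]


theorem eval_zero_fiberPoly {h k : ℕ} (hh : 0 < h) :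
    (fiberPoly h k).eval (0 : K) = k := by
  simp [fiberPoly, hh.ne']

theorem ne_zero_of_isRoot_fiberPoly [CharZero K] {h k : ℕ} (hh : 0 < h) (hk : 0 < k) {u : K}
    (hu : (fiberPoly h k).IsRoot u) : u ≠ 0 := by
  rintro rfl
  rw [IsRoot.def, eval_zero_fiberPoly hh] at hu
  exact Nat.cast_ne_zero.2 hk.ne' hu

theorem fiberPoly_ne_zero [CharZero K] {h k : ℕ} (hh : 0 < h) (hk : 0 < k) :
    fiberPoly h k ≠ (0 : K[X]) := by
  intro h0
  have h0' := eval_zero_fiberPoly (K := K) (k := k) hh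
  rw [h0, eval_zero] at h0'
  exact Nat.cast_ne_zero.2 hk.ne' h0'.symm

theorem natDegree_fiberPoly [CharZero K] {h k : ℕ} (hh : 0 < h) (hk : 0 < k) :
    (fiberPoly h k : K[X]).natDegree = h + k := by
  unfold fiberPoly
  compute_degree!
  simp [hh.ne', hk.ne']

theorem derivative_fiberPoly {h k : ℕ} (hh : 0 < h) :
    derivative (fiberPoly h k : K[X]) = C ((h : K) * (h + k)) * X ^ (h - 1) * (X ^ k - 1) := by
  obtain ⟨h, rfl⟩ := Nat.exists_eq_add_one_of_ne_zero hh.ne'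
  simp only [fiberPoly, derivative_add, derivative_sub, derivative_C_mul_X_pow, derivative_C]
  rw [show h + 1 + k - 1 = h + k by omega, Nat.add_sub_cancel]
  simp only [map_mul, map_add, map_natCast]
  push_cast
  ring

theorem fiberF_one_one [CharZero K] [DecidableEq K] {h k : ℕ} (hh : 0 < h) (hk : 0 < k) :
    fiberF h k (1 : K) 1 = (fun u => (u, u⁻¹)) '' (((fiberPoly h k : K[X]).roots.toFinset : Finset K) : Set K) := by
  ext ⟨u, v⟩
  simp only [fiberF, Set.mem_ofPred_eq, Set.mem_image, Finset.mem_coe, Multiset.mem_toFinset,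
    mem_roots (fiberPoly_ne_zero hh hk), Prod.mk.injEq]
  constructor
  · rintro ⟨hsum, hprod⟩
    refine ⟨u, ?_, rfl, (eq_inv_of_mul_eq_one_right hprod).symm⟩
    rw [IsRoot.def, eval_fiberPoly]
    linear_combination u ^ h * hsum - (k : K) * (congrArg (· ^ h) hprod)
  · rintro ⟨u, hroot, rfl, rfl⟩
    have hu := ne_zero_of_isRoot_fiberPoly hh hk hroot
    rw [IsRoot.def, eval_fiberPoly] at hroot
    refine ⟨?_, mul_inv_cancel₀ hu⟩
    have hinv : u ^ h * u⁻¹ ^ h = 1 := by rw [← mul_pow, mul_inv_cancel₀ hu, one_pow]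
    apply mul_left_cancel₀ (pow_ne_zero h hu)
    linear_combination hroot + (k : K) * hinv

theorem rootMultiplicity_one_fiberPoly [CharZero K] {h k : ℕ} (hh : 0 < h) (hk : 0 < k) :
    (fiberPoly h k : K[X]).rootMultiplicity 1 = 2 := by
  apply rootMultiplicity_eq_two_of_not_isRoot_derivative_derivative
  · simp [eval_fiberPoly]
  · simp [derivative_fiberPoly hh]
  · rw [derivative_fiberPoly hh, derivative_mul]
    have : (h : K) + k ≠ 0 := by exact_mod_cast (by omega : h + k ≠ 0)
    simp [derivative_X_pow, hh.ne', hk.ne', this]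

theorem rootMultiplicity_fiberPoly_of_ne_one [CharZero K] {h k : ℕ} (hh : 0 < h) (hk : 0 < k)
    (hcop : h.Coprime k) {u : K} (hu : (fiberPoly h k).IsRoot u) (hu1 : u ≠ 1) :
    (fiberPoly h k).rootMultiplicity u = 1 := by
  refine rootMultiplicity_eq_one_of_not_isRoot_derivative (fiberPoly_ne_zero hh hk) hu fun hu' => ?_
  have hu0 := ne_zero_of_isRoot_fiberPoly hh hk hu
  have hc : (h : K) * (h + k) ≠ 0 := by
    have : (h : K) + k ≠ 0 := by exact_mod_cast (by omega : h + k ≠ 0)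
    exact mul_ne_zero (Nat.cast_ne_zero.2 hh.ne') this
  rw [IsRoot.def, derivative_fiberPoly hh] at hu'
  simp only [eval_mul, eval_C, eval_pow, eval_X, eval_sub, eval_one, mul_eq_zero, hc,
    pow_eq_zero_iff', hu0, false_or, false_and, sub_eq_zero] at hu'
  rw [IsRoot.def, eval_fiberPoly, pow_add, hu', mul_one] at hu
  have huh : u ^ h = 1 := by
    have : (k : K) * (1 - u ^ h) = 0 := by linear_combination hu
    exact (sub_eq_zero.1 ((mul_eq_zero.1 this).resolve_left (Nat.cast_ne_zero.2 hk.ne'))).symm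
  exact hu1 ((pow_eq_one_iff_of_coprime hcop).1 ⟨huh, hu'⟩)

theorem card_roots_toFinset_fiberPoly [IsAlgClosed K] [CharZero K] [DecidableEq K] {h k : ℕ}
    (hh : 0 < h) (hk : 0 < k) (hcop : h.Coprime k) :
    (fiberPoly h k : K[X]).roots.toFinset.card = h + k - 1 := by
  have hp := fiberPoly_ne_zero (K := K) hh hk
  have := Multiset.card_toFinset_add_one_of_count_eq_two (s := (fiberPoly h k : K[X]).roots) (a := 1)
    (by rw [count_roots, rootMultiplicity_one_fiberPoly hh hk])
    fun u hu hu1 => by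
      rw [count_roots]
      exact rootMultiplicity_fiberPoly_of_ne_one hh hk hcop ((mem_roots hp).1 hu) hu1
  rw [IsAlgClosed.card_roots_eq_natDegree, natDegree_fiberPoly hh hk] at this
  omega

end Fiber

/-- For coprime positive integers `h, k`, the fiber of the projection
`F_{h,k} : S_{h,k} → ℂ²` over a nonzero point `(x, y)` of the branch curve
`x^(h+k) = y^(hk)` is finite with exactly `h + k - 1` elements, i.e. `F_{h,k}`
has simple branching over every smooth point of its branch curve. -/
theorem stmt_1 (h k : ℕ) (hh : 0 < h) (hk : 0 < k) (hcop : Nat.Coprime h k)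
    (x y : ℂ) (hne : (x, y) ≠ (0, 0)) (hxy : x ^ (h + k) = y ^ (h * k)) :
    {p : ℂ × ℂ | (h : ℂ) * p.1 ^ k + (k : ℂ) * p.2 ^ h = ((h : ℂ) + (k : ℂ)) * x ∧
        p.1 * p.2 = y}.Finite ∧
    {p : ℂ × ℂ | (h : ℂ) * p.1 ^ k + (k : ℂ) * p.2 ^ h = ((h : ℂ) + (k : ℂ)) * x ∧
        p.1 * p.2 = y}.ncard = h + k - 1 := by
  obtain ⟨t, rfl, rfl⟩ := (pow_eq_pow_iff_of_coprime (Nat.Coprime.mul_right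
    (Nat.coprime_self_add_left.2 hcop.symm) (Nat.coprime_add_self_left.2 hcop))).1 hxy
  have ht : t ≠ 0 := by
    rintro rfl
    simp [hh.ne', hk.ne'] at hne
  have hscale : Function.Injective fun p : ℂ × ℂ => (t ^ h * p.1, t ^ k * p.2) :=
    fun p q e => Prod.ext (mul_left_cancel₀ (pow_ne_zero h ht) (congrArg Prod.fst e))
      (mul_left_cancel₀ (pow_ne_zero k ht) (congrArg Prod.snd e))
  have hgraph : Function.Injective fun u : ℂ => (u, u⁻¹) := fun u v e => congrArg Prod.fst e
  change (fiberF h k _ _).Finite ∧ (fiberF h k _ _).ncard = h + k - 1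
  rw [fiberF_pow_pow h k ht, fiberF_one_one hh hk]
  refine ⟨((Finset.finite_toSet _).image _).image _, ?_⟩
  rw [Set.ncard_image_of_injective _ hscale, Set.ncard_image_of_injective _ hgraph,
    Set.ncard_coe_finset, card_roots_toFinset_fiberPoly hh hk hcop]
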